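/- If u, η are C² functions with β²h'' = (1 - u/√2)h where h := u - √2·η, u(x) < √2 for all x, and h(x) → 0 as |x| → ∞, then h ≡ 0 on ℝ. -/

import Mathlib

/-! If `h` took a positive value, decay at infinity would give a positive global maximum `x₀`,
where `h'' x₀ ≤ 0`; but the equation `β² h'' = (1 - u/√2) h` with `1 - u/√2 > 0` makes
`h'' x₀ > 0`. The same argument at a negative minimum shows `h ≥ 0`. -/

open Filter Topology

/-- By the second-derivative test a local maximum with `f'' > 0` would also be a local minimum,
so `f` would be locally constant and `f'' = 0` there. -/
theorem IsLocalMax.deriv_deriv_nonpos {f : ℝ → ℝ} {x₀ : ℝ} (hmax : IsLocalMax f x₀)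
    (hc : ContinuousAt f x₀) : deriv (deriv f) x₀ ≤ 0 := by
  by_contra! hpos
  have hmin : IsLocalMin f x₀ := isLocalMin_of_deriv_deriv_pos hpos hmax.deriv_eq_zero hc
  have hconst : f =ᶠ[𝓝 x₀] fun _ => f x₀ :=
    (hmax.and hmin).mono fun _ hx => le_antisymm hx.1 hx.2
  have hderiv : deriv f =ᶠ[𝓝 x₀] fun _ => 0 :=
    hconst.eventuallyEq_nhds.mono fun _ hy => by rw [hy.deriv_eq, deriv_const]
  rw [hderiv.deriv_eq, deriv_const] at hpos
  exact lt_irrefl 0 hpos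

theorem nonpos_of_tendsto_cocompact_of_deriv_deriv_pos {h : ℝ → ℝ} (hc : Continuous h)
    (h0 : Tendsto h (cocompact ℝ) (𝓝 0)) (hpos : ∀ x, 0 < h x → 0 < deriv (deriv h) x)
    (x : ℝ) : h x ≤ 0 := by
  by_contra! hx
  have hev : ∀ᶠ y in cocompact ℝ, h y ≤ h x := h0.eventually (eventually_le_nhds hx)
  obtain ⟨x₀, hx₀⟩ := hc.exists_forall_ge' x hev
  have hmax : IsLocalMax h x₀ := Eventually.of_forall hx₀
  exact (hmax.deriv_deriv_nonpos hc.continuousAt).not_gt (hpos x₀ (hx.trans_le (hx₀ x)))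

theorem eq_zero_of_tendsto_cocompact_of_deriv_deriv_sign {h : ℝ → ℝ} (hc : Continuous h)
    (h0 : Tendsto h (cocompact ℝ) (𝓝 0)) (hpos : ∀ x, 0 < h x → 0 < deriv (deriv h) x)
    (hneg : ∀ x, h x < 0 → deriv (deriv h) x < 0) (x : ℝ) : h x = 0 := by
  have hneg' : ∀ x, 0 < (-h) x → 0 < deriv (deriv (-h)) x := fun x hx => by
    rw [deriv.neg', deriv.fun_neg]
    exact neg_pos.mpr (hneg x (neg_pos.mp hx))
  have hle := nonpos_of_tendsto_cocompact_of_deriv_deriv_pos hc h0 hpos x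
  have hge := nonpos_of_tendsto_cocompact_of_deriv_deriv_pos hc.neg
    (by rw [← neg_zero]; exact h0.neg) hneg' x
  exact le_antisymm hle (neg_nonpos.mp hge)

theorem stmt_6_general (β : ℝ)
    (u h : ℝ → ℝ)
    (hlt : ∀ x, u x < Real.sqrt 2)
    (hh : ContDiff ℝ 2 h)
    (heq : ∀ x, β^2 * deriv (deriv h) x = (1 - u x / Real.sqrt 2) * h x)
    (hh0 : Filter.Tendsto h (Filter.cocompact ℝ) (nhds 0)) :
    ∀ x : ℝ, h x = 0 := by
  have hcoef : ∀ x, 0 < 1 - u x / Real.sqrt 2 := fun x => by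
    have := (div_lt_one (by positivity : (0 : ℝ) < Real.sqrt 2)).mpr (hlt x)
    linarith
  refine eq_zero_of_tendsto_cocompact_of_deriv_deriv_sign hh.continuous hh0 ?_ ?_
  · intro x hx
    exact pos_of_mul_pos_right ((heq x).symm ▸ mul_pos (hcoef x) hx) (sq_nonneg β)
  · intro x hx
    exact neg_of_mul_neg_right ((heq x).symm ▸ mul_neg_of_pos_of_neg (hcoef x) hx) (sq_nonneg β)

theorem stmt_6 (β : ℝ) (hβ : 0 < β)
    (u h : ℝ → ℝ)
    (hu : Continuous u) (hlt : ∀ x, u x < Real.sqrt 2)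
    (hh : ContDiff ℝ 2 h)
    (heq : ∀ x, β^2 * deriv (deriv h) x = (1 - u x / Real.sqrt 2) * h x)
    (hh0 : Filter.Tendsto h (Filter.cocompact ℝ) (nhds 0)) :
    ∀ x : ℝ, h x = 0 :=
  stmt_6_general β u h hlt hh heq hh0
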